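/- Suppose φ : ℝ^m → ℝ is differentiable, ȳ ∈ Δ_{m-1}, and for some direction d with ‖d‖ = √2 (of the form ±(e_i − e_j)) and some α with 0 < α ≤ ε it holds φ(ȳ + αd) > φ(ȳ) − γα². If ∇φ is Lipschitz continuous with constant L, then −∇φ(ȳ)ᵀd < (2L + γ)ε. -/

import Mathlib

open scoped RealInnerProductSpace

/-!
A failed sufficient-decrease test gives
`-γα² < φ(ȳ + αd) - φ(ȳ) ≤ α⟪∇φ(ȳ), d⟫ + L‖αd‖² = α⟪∇φ(ȳ), d⟫ + 2Lα²`,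
the second inequality being the mean value inequality for `φ - ⟪∇φ(ȳ), ·⟫` on the ball of
radius `‖αd‖` around `ȳ`, where its derivative is at most `L‖αd‖` by the Lipschitz bound.
Dividing by `α` and using `α ≤ ε` gives the claim.
-/

def unitSimplex (m : ℕ) : Set (EuclideanSpace ℝ (Fin m)) :=
  {y | (∀ i, 0 ≤ y i) ∧ ∑ i, y i = 1}

lemma nonneg_of_norm_sub_le_mul_norm_sub {E F : Type*} [NormedAddCommGroup E] [Nontrivial E]
    [NormedAddCommGroup F] {g : E → F} {L : ℝ} (hg : ∀ u v, ‖g u - g v‖ ≤ L * ‖u - v‖) :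
    0 ≤ L := by
  obtain ⟨x, hx⟩ := exists_ne (0 : E)
  have hLx : 0 ≤ L * ‖x‖ := by simpa using (norm_nonneg _).trans (hg x 0)
  exact nonneg_of_mul_nonneg_left hLx (norm_pos_iff.2 hx)

lemma sub_sub_inner_le_of_lipschitz_gradient {F : Type*} [NormedAddCommGroup F]
    [InnerProductSpace ℝ F] [CompleteSpace F] {f : F → ℝ} {G : F → F}
    (hf : ∀ x, HasGradientAt f (G x) x) {L : ℝ} (hL : 0 ≤ L)
    (hG : ∀ u v, ‖G u - G v‖ ≤ L * ‖u - v‖) (x v : F) :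
    f (x + v) - f x - ⟪G x, v⟫ ≤ L * ‖v‖ ^ 2 := by
  have hbound : ∀ z ∈ Metric.closedBall x ‖v‖,
      ‖InnerProductSpace.toDual ℝ F (G z) - InnerProductSpace.toDual ℝ F (G x)‖ ≤ L * ‖v‖ := by
    intro z hz
    rw [← map_sub, LinearIsometryEquiv.norm_map]
    exact (hG z x).trans (mul_le_mul_of_nonneg_left (mem_closedBall_iff_norm.1 hz) hL)
  have hmvt := (convex_closedBall x ‖v‖).norm_image_sub_le_of_norm_hasFDerivWithin_le'
    (fun z _ => (hf z).hasFDerivAt.hasFDerivWithinAt) hbound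
    (Metric.mem_closedBall_self (norm_nonneg v)) (y := x + v) (by simp)
  simp only [add_sub_cancel_left, InnerProductSpace.toDual_apply_apply] at hmvt
  calc f (x + v) - f x - ⟪G x, v⟫ ≤ |f (x + v) - f x - ⟪G x, v⟫| := le_abs_self _
    _ ≤ L * ‖v‖ * ‖v‖ := hmvt
    _ = L * ‖v‖ ^ 2 := by ring

lemma norm_single_sub_single_sq {ι : Type*} [Fintype ι] [DecidableEq ι] {i j : ι} (hij : i ≠ j) :
    ‖EuclideanSpace.single i (1 : ℝ) - EuclideanSpace.single j 1‖ ^ 2 = 2 := by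
  rw [← real_inner_self_eq_norm_sq, inner_sub_sub_self]
  simp [EuclideanSpace.inner_single_left, hij, hij.symm]
  norm_num

theorem stmt_14_general {m : ℕ} (φ : EuclideanSpace ℝ (Fin m) → ℝ)
    (G : EuclideanSpace ℝ (Fin m) → EuclideanSpace ℝ (Fin m))
    (hgrad : ∀ y, HasGradientAt φ (G y) y)
    (L : ℝ) (hLip : ∀ u v, ‖G u - G v‖ ≤ L * ‖u - v‖)
    (γ ε : ℝ) (hγ : 0 < γ)
    (ybar : EuclideanSpace ℝ (Fin m))
    (i j : Fin m) (hij : i ≠ j)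
    (d : EuclideanSpace ℝ (Fin m))
    (hd : d = EuclideanSpace.single i (1 : ℝ) - EuclideanSpace.single j 1 ∨
          d = EuclideanSpace.single j (1 : ℝ) - EuclideanSpace.single i 1)
    (α : ℝ) (hα : 0 < α ∧ α ≤ ε)
    (hfail : φ (ybar + α • d) > φ ybar - γ * α ^ 2) :
    ⟪-G ybar, d⟫ < (2 * L + γ) * ε := by
  obtain ⟨hα0, hαε⟩ := hα
  have : Nonempty (Fin m) := ⟨i⟩
  have hL : 0 ≤ L := nonneg_of_norm_sub_le_mul_norm_sub hLip
  have hd2 : ‖d‖ ^ 2 = 2 := by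
    rcases hd with rfl | rfl
    exacts [norm_single_sub_single_sq hij, norm_single_sub_single_sq hij.symm]
  have hdescent := sub_sub_inner_le_of_lipschitz_gradient hgrad hL hLip ybar (α • d)
  rw [real_inner_smul_right, norm_smul, mul_pow, hd2, Real.norm_eq_abs, sq_abs] at hdescent
  have hstep : ⟪-G ybar, d⟫ < (2 * L + γ) * α := by
    rw [inner_neg_left]
    nlinarith
  calc ⟪-G ybar, d⟫ < (2 * L + γ) * α := hstep
    _ ≤ (2 * L + γ) * ε := by gcongr

/-- if the line search fails along `d = ±(e_i - e_j)` (i.e.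
`φ(ȳ + αd) > φ(ȳ) - γα²` for some `0 < α ≤ ε`) and `∇φ` is `L`-Lipschitz, then
`-∇φ(ȳ)ᵀd < (2L + γ)ε`. -/
theorem stmt_14 {m : ℕ} (φ : EuclideanSpace ℝ (Fin m) → ℝ)
    (G : EuclideanSpace ℝ (Fin m) → EuclideanSpace ℝ (Fin m))
    (hgrad : ∀ y, HasGradientAt φ (G y) y)
    (L : ℝ) (hLip : ∀ u v, ‖G u - G v‖ ≤ L * ‖u - v‖)
    (γ ε : ℝ) (hγ : 0 < γ) (hε : 0 < ε)
    (ybar : EuclideanSpace ℝ (Fin m)) (hy : ybar ∈ unitSimplex m)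
    (i j : Fin m) (hij : i ≠ j)
    (d : EuclideanSpace ℝ (Fin m))
    (hd : d = EuclideanSpace.single i (1 : ℝ) - EuclideanSpace.single j 1 ∨
          d = EuclideanSpace.single j (1 : ℝ) - EuclideanSpace.single i 1)
    (α : ℝ) (hα : 0 < α ∧ α ≤ ε)
    (hfail : φ (ybar + α • d) > φ ybar - γ * α ^ 2) :
    ⟪-G ybar, d⟫ < (2 * L + γ) * ε :=
  stmt_14_general φ G hgrad L hLip γ ε hγ ybar i j hij d hd α hα hfail
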